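/- The integral ∫₁^∞ dy/(1 + e^y sin² y) is finite. -/
import Mathlib


open MeasureTheory Set
open scoped ENNReal

private lemma sin_sq_lower (k : ℕ) {y : ℝ} (hy : |y - (k : ℝ) * Real.pi| ≤ Real.pi / 2) :
    (2 / Real.pi) ^ 2 * (y - (k : ℝ) * Real.pi) ^ 2 ≤ Real.sin y ^ 2 := by
  set a : ℝ := (k : ℝ) * Real.pi with ha
  have h1 : Real.sin y ^ 2 = Real.sin (y - a) ^ 2 := by
    have h := Real.sin_add_nat_mul_pi (y - a) k
    rw [ha] at *
    rw [sub_add_cancel] at h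
    rw [h, mul_pow, ← pow_mul, mul_comm k 2, pow_mul, neg_one_sq, one_pow, one_mul]
  rw [h1]
  have h2 := Real.mul_abs_le_abs_sin hy
  have h3 : (0:ℝ) ≤ 2 / Real.pi * |y - a| := by positivity
  calc (2 / Real.pi) ^ 2 * (y - a) ^ 2 = (2 / Real.pi * |y - a|) ^ 2 := by
        rw [mul_pow, sq_abs]
    _ ≤ |Real.sin (y - a)| ^ 2 := by
        apply pow_le_pow_left₀ h3 h2
    _ = Real.sin (y - a) ^ 2 := sq_abs _

private lemma interval_bound (k : ℕ) :
    (∫⁻ y in Ico ((k : ℝ) * Real.pi - Real.pi / 2) ((k : ℝ) * Real.pi + Real.pi / 2),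
      ENNReal.ofReal (1 / (1 + Real.exp y * Real.sin y ^ 2)))
      ≤ ENNReal.ofReal (100 * Real.exp (-(k : ℝ))) := by
  have hπ := Real.pi_pos
  have hπ3 : (3:ℝ) < Real.pi := Real.pi_gt_three
  have hπ4 : Real.pi < 3.15 := Real.pi_lt_d2
  set a : ℝ := (k : ℝ) * Real.pi with ha
  set δ : ℝ := Real.exp (-(k : ℝ)) with hδ
  have hδpos : 0 < δ := Real.exp_pos _
  set c : ℝ := (2 / Real.pi) ^ 2 * Real.exp (a - Real.pi / 2) with hc
  have hcpos : 0 < c := by positivity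
  -- split
  have hsub : Ico (a - Real.pi / 2) (a + Real.pi / 2) ⊆
      Icc (a - δ) (a + δ) ∪ (Ico (a - Real.pi / 2) (a + Real.pi / 2) \ Icc (a - δ) (a + δ)) := by
    intro y hy
    by_cases h : y ∈ Icc (a - δ) (a + δ)
    · exact Or.inl h
    · exact Or.inr ⟨hy, h⟩
  have part1 : (∫⁻ y in Icc (a - δ) (a + δ),
      ENNReal.ofReal (1 / (1 + Real.exp y * Real.sin y ^ 2))) ≤ ENNReal.ofReal (2 * δ) := by
    calc (∫⁻ y in Icc (a - δ) (a + δ),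
          ENNReal.ofReal (1 / (1 + Real.exp y * Real.sin y ^ 2)))
        ≤ ∫⁻ _ in Icc (a - δ) (a + δ), 1 := by
          apply lintegral_mono
          intro y
          apply ENNReal.ofReal_le_one.2
          rw [div_le_one (by positivity)]
          nlinarith [Real.exp_pos y, sq_nonneg (Real.sin y), mul_nonneg (Real.exp_pos y).le (sq_nonneg (Real.sin y))]
      _ = volume (Icc (a - δ) (a + δ)) := setLIntegral_one _
      _ = ENNReal.ofReal (2 * δ) := by
          rw [Real.volume_Icc]; congr 1; ring
  have part2 : (∫⁻ y in Ico (a - Real.pi / 2) (a + Real.pi / 2) \ Icc (a - δ) (a + δ),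
      ENNReal.ofReal (1 / (1 + Real.exp y * Real.sin y ^ 2)))
      ≤ ENNReal.ofReal (1 / (c * δ ^ 2)) * ENNReal.ofReal Real.pi := by
    have hmeas : MeasurableSet (Ico (a - Real.pi / 2) (a + Real.pi / 2) \ Icc (a - δ) (a + δ)) :=
      measurableSet_Ico.diff measurableSet_Icc
    calc (∫⁻ y in Ico (a - Real.pi / 2) (a + Real.pi / 2) \ Icc (a - δ) (a + δ),
          ENNReal.ofReal (1 / (1 + Real.exp y * Real.sin y ^ 2)))
        ≤ ∫⁻ _ in Ico (a - Real.pi / 2) (a + Real.pi / 2) \ Icc (a - δ) (a + δ),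
            ENNReal.ofReal (1 / (c * δ ^ 2)) := by
          apply setLIntegral_mono' hmeas
          intro y hy
          obtain ⟨hy1, hy2⟩ := hy
          apply ENNReal.ofReal_le_ofReal
          have habs : |y - a| ≤ Real.pi / 2 := by
            rw [abs_le]
            constructor <;> [linarith [hy1.1]; linarith [hy1.2]]
          have hsin : (2 / Real.pi) ^ 2 * (y - a) ^ 2 ≤ Real.sin y ^ 2 := by
            have := sin_sq_lower k (y := y) (by rw [← ha]; exact habs)
            rwa [← ha] at this
          have hexp : Real.exp (a - Real.pi / 2) ≤ Real.exp y :=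
            Real.exp_le_exp.2 (by linarith [hy1.1])
          have hdist : δ ^ 2 ≤ (y - a) ^ 2 := by
            rw [Set.mem_Icc, not_and_or, not_le, not_le] at hy2
            rcases hy2 with h | h
            · nlinarith
            · nlinarith
          have hlow : c * δ ^ 2 ≤ 1 + Real.exp y * Real.sin y ^ 2 := by
            have h1 : c * δ ^ 2 ≤ c * (y - a) ^ 2 :=
              mul_le_mul_of_nonneg_left hdist hcpos.le
            have h2 : c * (y - a) ^ 2 ≤ Real.exp y * Real.sin y ^ 2 := by
              rw [hc]
              calc (2 / Real.pi) ^ 2 * Real.exp (a - Real.pi / 2) * (y - a) ^ 2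
                  = Real.exp (a - Real.pi / 2) * ((2 / Real.pi) ^ 2 * (y - a) ^ 2) := by ring
                _ ≤ Real.exp y * Real.sin y ^ 2 := by
                    apply mul_le_mul hexp hsin (by positivity) (Real.exp_pos _).le
            linarith
          exact one_div_le_one_div_of_le (by positivity) hlow
      _ = ENNReal.ofReal (1 / (c * δ ^ 2)) *
            volume (Ico (a - Real.pi / 2) (a + Real.pi / 2) \ Icc (a - δ) (a + δ)) :=
          setLIntegral_const _ _
      _ ≤ ENNReal.ofReal (1 / (c * δ ^ 2)) * ENNReal.ofReal Real.pi := by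
          apply mul_le_mul_right
          calc volume (Ico (a - Real.pi / 2) (a + Real.pi / 2) \ Icc (a - δ) (a + δ))
              ≤ volume (Ico (a - Real.pi / 2) (a + Real.pi / 2)) := measure_mono diff_subset
            _ = ENNReal.ofReal Real.pi := by rw [Real.volume_Ico]; congr 1; ring
  -- numeric bound
  have hnum : 2 * δ + 1 / (c * δ ^ 2) * Real.pi ≤ 100 * δ := by
    have key : Real.pi ≤ 98 * δ * (c * δ ^ 2) := by
      have hδ3 : Real.exp (a - Real.pi / 2) * (δ ^ 2 * δ) =
          Real.exp (a - Real.pi / 2 - 3 * k) := by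
        rw [hδ, pow_two, ← Real.exp_add, ← Real.exp_add, ← Real.exp_add]
        congr 1; ring
      have hce : c * δ ^ 2 * δ = 4 / Real.pi ^ 2 * Real.exp (a - Real.pi / 2 - 3 * k) := by
        rw [hc]
        calc (2 / Real.pi) ^ 2 * Real.exp (a - Real.pi / 2) * δ ^ 2 * δ
            = (2 / Real.pi) ^ 2 * (Real.exp (a - Real.pi / 2) * (δ ^ 2 * δ)) := by ring
          _ = (2 / Real.pi) ^ 2 * Real.exp (a - Real.pi / 2 - 3 * k) := by rw [hδ3]
          _ = 4 / Real.pi ^ 2 * Real.exp (a - Real.pi / 2 - 3 * k) := by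
              congr 1; rw [div_pow]; norm_num
      have hexp_low : Real.exp (-(Real.pi / 2)) ≤ Real.exp (a - Real.pi / 2 - 3 * k) := by
        apply Real.exp_le_exp.2
        rw [ha]
        nlinarith [Nat.cast_nonneg (α := ℝ) k]
      have hexp2 : Real.exp (Real.pi / 2) ≤ Real.exp 2 := Real.exp_le_exp.2 (by linarith)
      have he2 : Real.exp 2 < 7.39 := by
        have h1 := Real.exp_one_lt_d9
        have : Real.exp 2 = Real.exp 1 * Real.exp 1 := by
          rw [← Real.exp_add]; norm_num
        rw [this]; nlinarith [Real.exp_pos 1]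
      have hlow2 : (1:ℝ) / 7.39 ≤ Real.exp (-(Real.pi / 2)) := by
        rw [Real.exp_neg, ← one_div]
        exact one_div_le_one_div_of_le (Real.exp_pos _) (le_trans hexp2 he2.le)
      calc Real.pi ≤ 98 * (4 / Real.pi ^ 2) * (1 / 7.39) := by
            have heq : 98 * (4 / Real.pi ^ 2) * ((1:ℝ) / 7.39) = 392 / (Real.pi ^ 2 * 7.39) := by
              ring
            rw [heq, le_div_iff₀ (by positivity)]
            nlinarith
        _ ≤ 98 * (4 / Real.pi ^ 2) * Real.exp (-(Real.pi / 2)) := by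
            apply mul_le_mul_of_nonneg_left hlow2 (by positivity)
        _ ≤ 98 * (4 / Real.pi ^ 2) * Real.exp (a - Real.pi / 2 - 3 * k) := by
            apply mul_le_mul_of_nonneg_left hexp_low (by positivity)
        _ = 98 * δ * (c * δ ^ 2) := by
            rw [show (98:ℝ) * δ * (c * δ ^ 2) = 98 * (c * δ ^ 2 * δ) by ring, hce]; ring_nf
    have hpos : 0 < c * δ ^ 2 := by positivity
    have : 1 / (c * δ ^ 2) * Real.pi ≤ 98 * δ := by
      rw [div_mul_eq_mul_div, one_mul, div_le_iff₀ hpos]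
      linarith
    linarith
  calc (∫⁻ y in Ico (a - Real.pi / 2) (a + Real.pi / 2),
        ENNReal.ofReal (1 / (1 + Real.exp y * Real.sin y ^ 2)))
      ≤ ∫⁻ y in Icc (a - δ) (a + δ) ∪
          (Ico (a - Real.pi / 2) (a + Real.pi / 2) \ Icc (a - δ) (a + δ)),
          ENNReal.ofReal (1 / (1 + Real.exp y * Real.sin y ^ 2)) :=
        lintegral_mono_set hsub
    _ ≤ _ + _ := lintegral_union_le _ _ _
    _ ≤ ENNReal.ofReal (2 * δ) + ENNReal.ofReal (1 / (c * δ ^ 2)) * ENNReal.ofReal Real.pi :=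
        add_le_add part1 part2
    _ = ENNReal.ofReal (2 * δ + 1 / (c * δ ^ 2) * Real.pi) := by
        rw [← ENNReal.ofReal_mul (by positivity), ← ENNReal.ofReal_add (by positivity) (by positivity)]
    _ ≤ ENNReal.ofReal (100 * Real.exp (-(k : ℝ))) := ENNReal.ofReal_le_ofReal hnum

theorem stmt_16 :
    (∫⁻ y in Ici (1 : ℝ), ENNReal.ofReal (1 / (1 + Real.exp y * Real.sin y ^ 2))) < ⊤ := by
  have hπ := Real.pi_pos
  have hcov : Ici (1:ℝ) ⊆ ⋃ k : ℕ, Ico ((k : ℝ) * Real.pi - Real.pi / 2)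
      ((k : ℝ) * Real.pi + Real.pi / 2) := by
    intro y hy
    have hy1 : (1:ℝ) ≤ y := hy
    have hy0 : (0:ℝ) ≤ y := by linarith
    have h0 : (0:ℝ) ≤ y / Real.pi + 1/2 := by positivity
    refine mem_iUnion.2 ⟨⌊y / Real.pi + 1/2⌋₊, ?_⟩
    have hf1 : (⌊y / Real.pi + 1/2⌋₊ : ℝ) ≤ y / Real.pi + 1/2 := Nat.floor_le h0
    have hf2 : y / Real.pi + 1/2 < ⌊y / Real.pi + 1/2⌋₊ + 1 := Nat.lt_floor_add_one _
    have hid : y / Real.pi * Real.pi = y := div_mul_cancel₀ y hπ.ne'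
    constructor
    · nlinarith
    · nlinarith
  calc (∫⁻ y in Ici (1:ℝ), ENNReal.ofReal (1 / (1 + Real.exp y * Real.sin y ^ 2)))
      ≤ ∫⁻ y in ⋃ k : ℕ, Ico ((k : ℝ) * Real.pi - Real.pi / 2)
          ((k : ℝ) * Real.pi + Real.pi / 2),
          ENNReal.ofReal (1 / (1 + Real.exp y * Real.sin y ^ 2)) :=
        lintegral_mono_set hcov
    _ ≤ ∑' k : ℕ, ∫⁻ y in Ico ((k : ℝ) * Real.pi - Real.pi / 2)
          ((k : ℝ) * Real.pi + Real.pi / 2),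
          ENNReal.ofReal (1 / (1 + Real.exp y * Real.sin y ^ 2)) :=
        lintegral_iUnion_le _ _
    _ ≤ ∑' k : ℕ, ENNReal.ofReal (100 * Real.exp (-(k : ℝ))) :=
        ENNReal.tsum_le_tsum interval_bound
    _ = ENNReal.ofReal 100 * ∑' k : ℕ, ENNReal.ofReal (Real.exp (-1)) ^ k := by
        rw [← ENNReal.tsum_mul_left]
        congr 1
        ext k
        rw [ENNReal.ofReal_mul (by norm_num), ← ENNReal.ofReal_pow (Real.exp_pos _).le,
          ← Real.exp_nat_mul]
        congr 2
        ring
    _ < ⊤ := by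
        rw [ENNReal.tsum_geometric]
        apply ENNReal.mul_lt_top ENNReal.ofReal_lt_top
        rw [ENNReal.inv_lt_top, tsub_pos_iff_lt]
        exact ENNReal.ofReal_lt_one.2 (Real.exp_lt_one_iff.2 (by norm_num))
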